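/- arXiv:1906.09091 — 10 statements merged into one kernel-verified Lean document; each statement's English description precedes it below -/
import Mathlib

section
/- For every real α, the large solutions k of the equation k(1 + 3cos k) + α·sin k = 0 approach arccos(−1/3) modulo 2π: precisely, for every ε > 0 there exists K such that every solution k > K satisfies dist(cos k, −1/3) < ε, i.e. |cos k + 1/3| < ε. -/
open Real

lemma three_mul_abs_cos_add_third_le {α k : ℝ} (hk : 0 ≤ k)
    (h : k * (1 + 3 * cos k) + α * sin k = 0) : 3 * k * |cos k + 1 / 3| ≤ |α| :=
  calc 3 * k * |cos k + 1 / 3| = |k * (1 + 3 * cos k)| := by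
        rw [abs_mul, abs_of_nonneg hk, show 1 + 3 * cos k = 3 * (cos k + 1 / 3) by ring,
          abs_mul, abs_of_pos (three_pos : (0:ℝ) < 3)]
        ring
    _ = |α * sin k| := by rw [eq_neg_of_add_eq_zero_left h, abs_neg]
    _ ≤ |α| := by rw [abs_mul]; exact mul_le_of_le_one_right (abs_nonneg α) (abs_sin_le_one k)

/-- Large solutions of the secular equation k(1 + 3 cos k) + α sin k = 0 of a component
of the tetrahedron quantum graph with δ-coupling approach arccos(−1/3) modulo 2π:
their cosines approach −1/3. -/
theorem tetrahedron_delta_large_solutions (α : ℝ) :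
    ∀ ε : ℝ, ε > 0 → ∃ K : ℝ, ∀ k : ℝ, k > K →
      k * (1 + 3 * cos k) + α * sin k = 0 → |cos k + 1 / 3| < ε := by
  intro ε hε
  have hK : 0 ≤ |α| / (3 * ε) := by positivity
  refine ⟨|α| / (3 * ε), fun k hk h => ?_⟩
  have hbound := three_mul_abs_cos_add_third_le (hK.trans hk.le) h
  have hα : |α| < 3 * ε * k := (div_lt_iff₀' (by positivity)).mp hk
  have hk3 : 0 ≤ 3 * k := by linarith
  exact lt_of_mul_lt_mul_left (by linarith) hk3
end

section
/- Suppose k > 0 satisfies k²cos²(k/2) + 3cos²(k/2) − 1 = 0. Then |cos(k/2)| = 1/√(k²+3) ≤ 1/k, and consequently there exists an integer n such that |k − π − 2nπ| ≤ 2√2/k + O(1/k²) as k → ∞ along such solutions. -/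
set_option maxHeartbeats 800000


open Real

/-- Solutions of k²cos²(k/2) + 3cos²(k/2) − 1 = 0 (a factor of the secular equation for
the tetrahedron with preferred-orientation coupling) are localized near odd multiples
of π with distance at most 2√2/k up to an O(1/k²) error. -/
theorem tetrahedron_po_localization :
    ∃ C : ℝ, ∀ k : ℝ, k > 0 →
      k ^ 2 * cos (k / 2) ^ 2 + 3 * cos (k / 2) ^ 2 - 1 = 0 →
        |cos (k / 2)| = 1 / Real.sqrt (k ^ 2 + 3) ∧
        |cos (k / 2)| ≤ 1 / k ∧
        (k ≥ Real.sqrt 3 → |cos (k / 2)| ≤ Real.sqrt 2 / k) ∧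
        ∃ n : ℤ, |k - π - 2 * n * π| ≤ 2 * Real.sqrt 2 / k + C / k ^ 2 := by
  refine ⟨4 * π, fun k hk heq => ?_⟩
  have hk2 : (0:ℝ) < k ^ 2 + 3 := by positivity
  have hcos2 : cos (k / 2) ^ 2 = 1 / (k ^ 2 + 3) := by
    field_simp
    nlinarith [heq]
  have hs_pos : 0 < Real.sqrt (k ^ 2 + 3) := Real.sqrt_pos.2 hk2
  have hks : k ≤ Real.sqrt (k ^ 2 + 3) := by
    have h := Real.sqrt_le_sqrt (show k ^ 2 ≤ k ^ 2 + 3 by linarith)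
    rwa [Real.sqrt_sq hk.le] at h
  have habs : |cos (k / 2)| = 1 / Real.sqrt (k ^ 2 + 3) := by
    rw [← Real.sqrt_sq_eq_abs, hcos2, one_div, one_div, Real.sqrt_inv]
  have h1k : |cos (k / 2)| ≤ 1 / k := by
    rw [habs]
    exact one_div_le_one_div_of_le hk hks
  have hsqrt2 : (1:ℝ) ≤ Real.sqrt 2 := by
    rw [show (1:ℝ) = Real.sqrt 1 by simp]
    exact Real.sqrt_le_sqrt (by norm_num)
  refine ⟨habs, h1k, fun _ => ?_, ?_⟩
  · rw [habs, div_le_div_iff₀ hs_pos hk, one_mul]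
    have h2 : Real.sqrt 2 * Real.sqrt (k ^ 2 + 3) = Real.sqrt (2 * (k ^ 2 + 3)) :=
      (Real.sqrt_mul (by norm_num) _).symm
    rw [h2]
    have h3 := Real.sqrt_le_sqrt (show k ^ 2 ≤ 2 * (k ^ 2 + 3) by nlinarith)
    rwa [Real.sqrt_sq hk.le] at h3
  · have hπ := pi_pos
    set m : ℤ := round ((k / 2 - π / 2) / π) with hm
    obtain ⟨δ, hδdef⟩ : ∃ δ : ℝ, δ = k / 2 - π / 2 - m * π := ⟨_, rfl⟩
    have hδle : |δ| ≤ π / 2 := by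
      have h1 : |(k / 2 - π / 2) / π - m| ≤ 1 / 2 := abs_sub_round _
      have h2 : δ = ((k / 2 - π / 2) / π - m) * π := by
        rw [hδdef]; field_simp
      rw [h2, abs_mul, abs_of_pos hπ]
      nlinarith [abs_nonneg ((k / 2 - π / 2) / π - (m:ℝ))]
    have hkeq : k / 2 = (δ + π / 2) + (m : ℝ) * π := by rw [hδdef]; ring
    have habs2 : |cos (k / 2)| = |Real.sin δ| := by
      rw [hkeq, Real.cos_add_int_mul_pi, Real.cos_add_pi_div_two]
      rcases Int.even_or_odd m with he | ho
      · rw [he.neg_one_zpow]; simp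
      · rw [ho.neg_one_zpow]; simp
    obtain ⟨hδl, hδr⟩ := abs_le.1 hδle
    have hsinabs : Real.sin |δ| = |Real.sin δ| := by
      rcases le_or_gt 0 δ with h | h
      · rw [abs_of_nonneg h,
          abs_of_nonneg (Real.sin_nonneg_of_nonneg_of_le_pi h (by linarith))]
      · rw [abs_of_neg h, Real.sin_neg,
          abs_of_nonpos (Real.sin_nonpos_of_nonpos_of_neg_pi_le h.le (by linarith))]
    have hsval : Real.sin |δ| = 1 / Real.sqrt (k ^ 2 + 3) := by
      rw [hsinabs, ← habs2, habs]
    have hδbound : |δ| ≤ π / 2 * (1 / Real.sqrt (k ^ 2 + 3)) := by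
      have h1 := Real.mul_le_sin (abs_nonneg δ) hδle
      rw [hsval] at h1
      have h2 : 2 / π * |δ| * π = 2 * |δ| := by field_simp
      have h3 := mul_le_mul_of_nonneg_right h1 hπ.le
      rw [h2] at h3
      nlinarith
    refine ⟨m, ?_⟩
    have hgoal : k - π - 2 * m * π = 2 * δ := by rw [hδdef]; ring
    rw [hgoal, abs_mul, abs_two]
    rcases lt_or_ge k 2 with hk2' | hk2'
    · have h1 : 2 * |δ| ≤ π := by linarith
      have h2 : π ≤ 4 * π / k ^ 2 := by
        rw [le_div_iff₀ (by positivity)]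
        nlinarith [mul_pos hπ (show (0:ℝ) < 4 - k ^ 2 by nlinarith)]
      have h3 : 0 < 2 * Real.sqrt 2 / k := by positivity
      linarith
    · have hsk : 1 / Real.sqrt (k ^ 2 + 3) ≤ 1 / k := one_div_le_one_div_of_le hk hks
      have hδk : |δ| ≤ π / 2 * (1 / k) := by
        refine hδbound.trans ?_
        have : (0:ℝ) < π / 2 := by linarith
        nlinarith
      have h2k : (1:ℝ) / k ≤ 1 / 2 := by
        rw [div_le_div_iff₀ hk (by norm_num)]
        linarith
      have hδ1 : |δ| ≤ 1 := by
        have hpi315 := Real.pi_lt_d2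
        calc |δ| ≤ π / 2 * (1 / k) := hδk
          _ ≤ π / 2 * (1 / 2) := by nlinarith
          _ ≤ 1 := by nlinarith
      rcases eq_or_lt_of_le (abs_nonneg δ) with h0 | h0
      · rw [← h0, mul_zero]
        positivity
      · have hcube := Real.sin_gt_sub_cube h0
        rw [hsval] at hcube
        have e1 : 2 * |δ| ≤ 2 / k + |δ| ^ 3 / 2 := by
          have h4 : |δ| ≤ 1 / k + |δ| ^ 3 / 4 := by linarith [hsk, pow_nonneg (abs_nonneg δ) 3]
          have h5 : 2 / k = 2 * (1 / k) := by ring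
          linarith
        have hc3 : |δ| ^ 3 ≤ (π / 2 * (1 / k)) ^ 3 := pow_le_pow_left₀ (abs_nonneg δ) hδk 3
        have e2 : (π / 2 * (1 / k)) ^ 3 / 2 ≤ 4 * π / k ^ 2 := by
          have hid : (π / 2 * (1 / k)) ^ 3 / 2 = π ^ 3 / (16 * k ^ 3) := by
            field_simp; ring
          rw [hid, div_le_div_iff₀ (by positivity) (by positivity)]
          have hpi315 := Real.pi_lt_d2
          have hpk : 0 < π * k ^ 2 := by positivity
          have hπ2 : π ^ 2 < 10 := by nlinarith
          nlinarith [mul_lt_mul_of_pos_right hπ2 hpk,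
            mul_nonneg (show (0:ℝ) ≤ 64 * k - 10 by linarith) hpk.le]
        have e3 : 2 / k ≤ 2 * Real.sqrt 2 / k := by
          gcongr
          linarith
        linarith
end

section
/- Let k > 0 satisfy k·sin(k/2) − ε√3·cos(k/2) = 0 where ε ∈ {+1, −1}. Then |sin(k/2)| ≤ √3/k, and consequently there exists an integer n with |k − 2nπ| ≤ 2√3/k + O(1/k²) for large k. -/
open Real

/-- Solutions of k sin(k/2) − ε√3 cos(k/2) = 0, ε = ±1 (a factor of the secular equation
for the tetrahedron with preferred-orientation coupling, sectors j = 1, 2), satisfy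
|sin(k/2)| ≤ √3/k and are localized near even multiples of π. -/
theorem tetrahedron_po_localization_j12 :
    ∃ C : ℝ, ∀ k : ℝ, k > 0 → ∀ ε : ℝ, (ε = 1 ∨ ε = -1) →
      k * sin (k / 2) - ε * Real.sqrt 3 * cos (k / 2) = 0 →
        |sin (k / 2)| ≤ Real.sqrt 3 / k ∧
        ∃ n : ℤ, |k - 2 * n * π| ≤ 2 * Real.sqrt 3 / k + C / k ^ 2 := by
  have hs0 : (0:ℝ) ≤ Real.sqrt 3 := Real.sqrt_nonneg 3
  have hs2 : Real.sqrt 3 ≤ 2 := by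
    rw [show (2:ℝ) = Real.sqrt 4 by
      rw [show (4:ℝ) = 2^2 by norm_num, Real.sqrt_sq (by norm_num)]]
    exact Real.sqrt_le_sqrt (by norm_num)
  refine ⟨64, fun k hk ε hε heq => ?_⟩
  have habs : |ε| = 1 := by rcases hε with h | h <;> simp [h]
  -- part 1
  have h1 : k * |sin (k / 2)| ≤ Real.sqrt 3 := by
    have : k * sin (k / 2) = ε * Real.sqrt 3 * cos (k / 2) := by linarith
    calc k * |sin (k / 2)| = |k * sin (k / 2)| := by
          rw [abs_mul, abs_of_pos hk]
      _ = |ε| * Real.sqrt 3 * |cos (k / 2)| := by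
          rw [this, abs_mul, abs_mul, abs_of_nonneg hs0]
      _ ≤ 1 * Real.sqrt 3 * 1 := by
          apply mul_le_mul (by rw [habs]) (abs_cos_le_one _) (abs_nonneg _) (by positivity)
      _ = Real.sqrt 3 := by ring
  have hfirst : |sin (k / 2)| ≤ Real.sqrt 3 / k :=
    (le_div_iff₀ hk).mpr (by linarith [h1, mul_comm k |sin (k/2)|])
  refine ⟨hfirst, ?_⟩
  rcases le_or_gt k 4 with hk4 | hk4
  · refine ⟨0, ?_⟩
    have : |k - 2 * (0:ℤ) * π| = k := by
      push_cast; rw [show k - 2 * 0 * π = k by ring, abs_of_pos hk]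
    rw [this]
    have h64 : k ≤ 64 / k ^ 2 := by
      rw [le_div_iff₀ (by positivity)]; nlinarith
    have : 0 ≤ 2 * Real.sqrt 3 / k := by positivity
    linarith
  · -- large k
    set x := k / 2 with hx
    set m : ℤ := round (x / π) with hm
    set d := |x - m * π| with hd
    have hpi : (0:ℝ) < π := Real.pi_pos
    have hdpi : d ≤ π / 2 := by
      have h := abs_sub_round (x / π)
      have hrw : x - m * π = π * (x / π - m) := by field_simp
      rw [hd, hrw, abs_mul, abs_of_pos hpi]
      calc π * |x / π - ↑m| ≤ π * (1/2) :=
            mul_le_mul_of_nonneg_left h (le_of_lt hpi)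
        _ = π / 2 := by ring
    have hd0 : 0 ≤ d := abs_nonneg _
    have hsinx : |sin x| = sin d := by
      have h1 : sin x = (-1 : ℝ) ^ m * sin (x - m * π) := by
        rw [show x = (x - m * π) + m * π by ring, Real.sin_add_int_mul_pi]
        ring_nf
      have h2 : |sin x| = |sin (x - m * π)| := by
        rw [h1, abs_mul]
        have : |(-1 : ℝ) ^ m| = 1 := by
          rcases Int.even_or_odd m with he | ho
          · rw [he.neg_one_zpow]; norm_num
          · rw [ho.neg_one_zpow]; norm_num
        rw [this, one_mul]
      rw [h2, hd]
      rcases le_or_gt 0 (x - m * π) with h | h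
      · rw [abs_of_nonneg h, abs_of_nonneg (Real.sin_nonneg_of_nonneg_of_le_pi h
          (by rw [hd, abs_of_nonneg h] at hdpi; linarith))]
      · rw [abs_of_neg h, Real.sin_neg]
        have hnp : sin (x - m * π) ≤ 0 := by
          apply Real.sin_nonpos_of_nonpos_of_neg_pi_le (le_of_lt h)
          rw [hd, abs_of_neg h] at hdpi; linarith
        rw [abs_of_nonpos hnp]
    have hsd : sin d ≤ Real.sqrt 3 / k := by rw [← hsinx]; exact hfirst
    have hsk : Real.sqrt 3 / k < 3 / 4 := by
      rw [div_lt_iff₀ hk]; nlinarith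
    have hd1 : d ≤ 1 := by
      by_contra h
      push_neg at h
      have hmono : sin 1 ≤ sin d := by
        apply Real.strictMonoOn_sin.monotoneOn ⟨by linarith, by linarith [Real.pi_gt_three]⟩
          ⟨by linarith, by linarith⟩ (le_of_lt h)
      have : (1:ℝ) - 1 ^ 3 / 4 < sin 1 := by
        have := Real.sin_gt_sub_cube (x := 1) one_pos; linarith
      norm_num at this
      linarith
    -- main bound
    have hdle : d ≤ Real.sqrt 3 / k + d ^ 3 / 4 := by
      rcases eq_or_lt_of_le hd0 with h | h
      · rw [← h]
        have : 0 ≤ Real.sqrt 3 / k := by positivity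
        norm_num
        linarith
      · have := Real.sin_gt_sub_cube h; have := pow_nonneg hd0 3
        linarith
    have hd3d : d ^ 3 ≤ d := by
      calc d ^ 3 ≤ d ^ 1 := pow_le_pow_of_le_one hd0 hd1 (by norm_num)
        _ = d := pow_one d
    have hdle2 : d ≤ 4 / 3 * (Real.sqrt 3 / k) := by linarith
    have hd3k : d ≤ 3 / k := by
      have : (4:ℝ) / 3 * (Real.sqrt 3 / k) ≤ 4 / 3 * (2 / k) := by gcongr
      have h2 : (4:ℝ) / 3 * (2 / k) ≤ 3 / k := by
        rw [show (4:ℝ) / 3 * (2 / k) = 8 / 3 / k by ring, div_le_div_iff₀ hk hk]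
        nlinarith
      linarith [le_trans hdle2 (le_trans this h2)]
    have hcube : d ^ 3 ≤ 27 / k ^ 3 := by
      calc d ^ 3 ≤ (3 / k) ^ 3 := pow_le_pow_left₀ hd0 hd3k 3
        _ = 27 / k ^ 3 := by rw [div_pow]; norm_num
    have hkey : d ^ 3 / 4 ≤ 32 / k ^ 2 := by
      have h27 : (27:ℝ) / k ^ 3 ≤ 128 / k ^ 2 := by
        rw [div_le_div_iff₀ (by positivity) (by positivity)]
        nlinarith
      calc d ^ 3 / 4 ≤ (128 / k ^ 2) / 4 := by linarith
        _ = 32 / k ^ 2 := by ring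
    refine ⟨m, ?_⟩
    have hkx : k - 2 * m * π = 2 * (x - m * π) := by rw [hx]; ring
    have habs2 : |k - 2 * (m:ℝ) * π| = 2 * d := by
      rw [hkx, abs_mul, abs_of_nonneg (by norm_num : (0:ℝ) ≤ 2), hd]
    rw [habs2]
    have hfin : d ≤ Real.sqrt 3 / k + 32 / k ^ 2 := by linarith
    have hgoal : (2:ℝ) * Real.sqrt 3 / k + 64 / k ^ 2
        = 2 * (Real.sqrt 3 / k + 32 / k ^ 2) := by ring
    rw [hgoal]
    linarith
end

section
/- Every sufficiently large eigenvalue square root k of the tetrahedron quantum graph with preferred-orientation coupling satisfies k·sin(k/2)·[k·sin(k/2) − ε√3·cos(k/2)]·[k²cos²(k/2) + 3cos²(k/2) − 1] = 0 for ε ∈ {0, 1, −1}, and hence lies in an interval (nπ − 2√3/k + O(1/k²), nπ + 2√3/k + O(1/k²)) for some n ∈ ℤ. -/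
open Real

lemma my_abs_arctan_le (y : ℝ) : |arctan y| ≤ |y| := by
  rcases lt_trichotomy y 0 with h | h | h
  · rw [abs_of_neg h, abs_of_neg (by simpa using Real.arctan_strictMono (by linarith : y < 0) |>.trans_eq Real.arctan_zero)]
    have h1 : 0 < arctan (-y) := by
      rw [← Real.arctan_zero]; exact Real.arctan_strictMono (by linarith)
    have := (Real.lt_tan h1 (Real.arctan_lt_pi_div_two _)).le
    rw [Real.tan_arctan] at this
    rw [← Real.arctan_neg]; linarith
  · simp [h]
  · rw [abs_of_pos h, abs_of_pos (by rw [← Real.arctan_zero]; exact Real.arctan_strictMono h)]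
    have h1 : 0 < arctan y := by rw [← Real.arctan_zero]; exact Real.arctan_strictMono h
    have := (Real.lt_tan h1 (Real.arctan_lt_pi_div_two _)).le
    rw [Real.tan_arctan] at this; exact this

lemma my_near_multiple (x : ℝ) (hc : cos x ≠ 0) : ∃ m : ℤ, |x - m * π| ≤ |tan x| := by
  have hθ : sin (x - arctan (tan x)) = 0 := by
    rw [Real.sin_sub, Real.sin_arctan, Real.cos_arctan, Real.tan_eq_sin_div_cos]
    field_simp
    ring
  obtain ⟨m, hm⟩ := Real.sin_eq_zero_iff.mp hθ
  refine ⟨m, ?_⟩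
  have : x - m * π = arctan (tan x) := by linarith
  rw [this]
  exact my_abs_arctan_le _

lemma my_conclude (k : ℝ) (hk : k > 10)
    (h : ∃ n : ℤ, |k - n * π| ≤ 2 * Real.sqrt 3 / k) :
    ∃ n : ℤ,
      (n : ℝ) * π - 2 * Real.sqrt 3 / k - 1 / k ^ 2 < k ∧
      k < n * π + 2 * Real.sqrt 3 / k + 1 / k ^ 2 := by
  obtain ⟨n, hn⟩ := h
  rw [abs_le] at hn
  have h1 : (0:ℝ) < 1 / k ^ 2 := by positivity
  exact ⟨n, by constructor <;> linarith [hn.1, hn.2]⟩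

/-- Every sufficiently large eigenvalue square root k of the tetrahedron quantum graph
with preferred-orientation coupling (defined via the secular equations of the three
component operators) lies in an interval (nπ − 2√3/k + O(1/k²), nπ + 2√3/k + O(1/k²)). -/
theorem tetrahedron_po_spectrum_localization :
    ∃ C K : ℝ, ∀ k : ℝ, k > K →
      (∃ ε : ℝ, (ε = 0 ∨ ε = 1 ∨ ε = -1) ∧
        k * sin (k / 2) * (k * sin (k / 2) - ε * Real.sqrt 3 * cos (k / 2)) *
          (k ^ 2 * cos (k / 2) ^ 2 + 3 * cos (k / 2) ^ 2 - 1) = 0) →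
      ∃ n : ℤ,
        n * π - 2 * Real.sqrt 3 / k - C / k ^ 2 < k ∧
        k < n * π + 2 * Real.sqrt 3 / k + C / k ^ 2 := by
  refine ⟨1, 10, fun k hk h => ?_⟩
  obtain ⟨ε, hε, heq⟩ := h
  have hk0 : (0:ℝ) < k := by linarith
  have hs3 : Real.sqrt 3 > 1 := by
    nlinarith [Real.sq_sqrt (by norm_num : (3:ℝ) ≥ 0), Real.sqrt_nonneg 3]
  apply my_conclude k hk
  -- case split on the factors
  set s := sin (k / 2) with hs_def
  set c := cos (k / 2) with hc_def
  have hsc : s ^ 2 + c ^ 2 = 1 := by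
    rw [hs_def, hc_def]; exact Real.sin_sq_add_cos_sq _
  -- the "sin = 0" case as a sub-result
  have sin_zero_case : s = 0 → ∃ n : ℤ, |k - n * π| ≤ 2 * Real.sqrt 3 / k := by
    intro hs0
    obtain ⟨m, hm⟩ := Real.sin_eq_zero_iff.mp hs0
    refine ⟨2 * m, ?_⟩
    have : k - (2 * m : ℤ) * π = 0 := by push_cast; linarith
    rw [this, abs_zero]
    positivity
  rcases mul_eq_zero.mp heq with h1 | hQ
  · rcases mul_eq_zero.mp h1 with h2 | h3
    · rcases mul_eq_zero.mp h2 with hk' | hs0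
      · exact absurd hk' hk0.ne'
      · exact sin_zero_case hs0
    · -- k * s = ε * √3 * c
      by_cases hs0 : s = 0
      · exact sin_zero_case hs0
      · have hc0 : c ≠ 0 := by
          intro hc0
          apply hs0
          have : k * s = 0 := by rw [hc0] at h3; linarith
          rcases mul_eq_zero.mp this with h | h
          · exact absurd h hk0.ne'
          · exact h
        have htan : tan (k / 2) = ε * Real.sqrt 3 / k := by
          rw [Real.tan_eq_sin_div_cos, ← hs_def, ← hc_def]
          field_simp
          nlinarith [h3]
        obtain ⟨m, hm⟩ := my_near_multiple (k / 2) (by rwa [← hc_def])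
        refine ⟨2 * m, ?_⟩
        rw [htan] at hm
        have hεa : |ε| ≤ 1 := by rcases hε with h | h | h <;> simp [h]
        have habs : |ε * Real.sqrt 3 / k| ≤ Real.sqrt 3 / k := by
          rw [abs_div, abs_mul, abs_of_pos hk0, abs_of_pos (by linarith : (0:ℝ) < Real.sqrt 3)]
          rw [div_le_div_iff_of_pos_right hk0]
          nlinarith [Real.sqrt_nonneg 3]
        have : |k - (2 * m : ℤ) * π| = 2 * |k / 2 - m * π| := by
          rw [show k - ((2 * m : ℤ) : ℝ) * π = 2 * (k / 2 - m * π) by push_cast; ring,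
            abs_mul, abs_two]
        rw [this]
        calc 2 * |k / 2 - m * π| ≤ 2 * (Real.sqrt 3 / k) := by linarith [hm.trans habs]
          _ = 2 * Real.sqrt 3 / k := by ring
  · -- Q = 0 : k^2 c^2 + 3 c^2 - 1 = 0
    have hc2 : c ^ 2 = 1 / (k ^ 2 + 3) := by
      field_simp
      nlinarith [hQ]
    have hs2 : s ^ 2 = (k ^ 2 + 2) / (k ^ 2 + 3) := by
      field_simp at hc2 ⊢
      nlinarith
    have hs0 : s ≠ 0 := by
      intro h
      rw [h] at hs2
      have : (0:ℝ) < (k ^ 2 + 2) / (k ^ 2 + 3) := by positivity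
      simp at hs2
      nlinarith
    set x := k / 2 - π / 2 with hx_def
    have hcx : cos x = s := by
      rw [hx_def, show k / 2 - π / 2 = -(π / 2 - k / 2) by ring, Real.cos_neg,
        Real.cos_pi_div_two_sub]
    have hsx : sin x = -c := by
      rw [hx_def, show k / 2 - π / 2 = -(π / 2 - k / 2) by ring, Real.sin_neg,
        Real.sin_pi_div_two_sub]
    obtain ⟨m, hm⟩ := my_near_multiple x (by rw [hcx]; exact hs0)
    refine ⟨2 * m + 1, ?_⟩
    have htanb : |tan x| ≤ Real.sqrt 3 / k := by
      have ht2 : tan x ^ 2 = 1 / (k ^ 2 + 2) := by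
        rw [Real.tan_eq_sin_div_cos, hsx, hcx, div_pow, neg_sq, hc2, hs2]
        have h1 : (k ^ 2 + 3) ≠ 0 := by positivity
        have h2 : (k ^ 2 + 2) ≠ 0 := by positivity
        field_simp
      have hle : tan x ^ 2 ≤ (Real.sqrt 3 / k) ^ 2 := by
        rw [ht2, div_pow, Real.sq_sqrt (by norm_num : (3:ℝ) ≥ 0)]
        rw [div_le_div_iff₀ (by positivity) (by positivity)]
        nlinarith
      calc |tan x| = Real.sqrt (tan x ^ 2) := (Real.sqrt_sq_eq_abs _).symm
        _ ≤ Real.sqrt ((Real.sqrt 3 / k) ^ 2) := Real.sqrt_le_sqrt hle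
        _ = Real.sqrt 3 / k := by
            rw [Real.sqrt_sq_eq_abs]; exact abs_of_pos (by positivity)
    have heq2 : |k - (2 * m + 1 : ℤ) * π| = 2 * |x - m * π| := by
      rw [show k - ((2 * m + 1 : ℤ) : ℝ) * π = 2 * (x - m * π) by
        rw [hx_def]; push_cast; ring, abs_mul, abs_two]
    rw [heq2]
    calc 2 * |x - m * π| ≤ 2 * (Real.sqrt 3 / k) := by linarith [hm.trans htanb]
      _ = 2 * Real.sqrt 3 / k := by ring
end

section
/- Let ω be a fourth root of unity and α ∈ ℝ. The large solutions k of k(−ω² + 4ω·cos k − 1)sin²k + αω·sin³k = 0 with sin k ≠ 0 satisfy: cos k → (ω² + 1)/(4ω) as k → ∞; in particular for ω = −1 one has cos k → −1/2 (so k → ±2π/3 mod 2π) and for ω = ±i one has cos k → 0 (so k → π/2 mod π). -/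
open Real

/-- Secular equation for the octahedron quantum graph with δ-coupling, sectors
j = 1, 2, 3: large solutions with sin k ≠ 0 satisfy cos k → (ω² + 1)/(4ω); in
particular cos k → −1/2 for ω = −1 and cos k → 0 for ω = ±i. -/
theorem octahedron_delta_large_solutions (ω : ℂ) (hω : ω ^ 4 = 1) (α : ℝ) :
    ∀ ε : ℝ, ε > 0 → ∃ K : ℝ, ∀ k : ℝ, k > K → Real.sin k ≠ 0 →
      (k : ℂ) * (-ω ^ 2 + 4 * ω * (Real.cos k : ℂ) - 1) * (Real.sin k : ℂ) ^ 2
        + (α : ℂ) * ω * (Real.sin k : ℂ) ^ 3 = 0 →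
      ‖(Real.cos k : ℂ) - (ω ^ 2 + 1) / (4 * ω)‖ < ε ∧
      (ω = -1 → |Real.cos k + 1 / 2| < ε) ∧
      (ω ^ 2 = -1 → |Real.cos k| < ε) := by
  intro ε hε
  refine ⟨max 1 (|α| / (4 * ε)), fun k hk hs heq => ?_⟩
  have hω0 : ω ≠ 0 := by
    intro h; rw [h] at hω; norm_num at hω
  have hk1 : (1:ℝ) < k := lt_of_le_of_lt (le_max_left _ _) hk
  have hk0 : (k:ℂ) ≠ 0 := by
    exact_mod_cast (by linarith : (k:ℝ) ≠ 0)
  have hsC : (Real.sin k : ℂ) ≠ 0 := Complex.ofReal_ne_zero.mpr hs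
  have h1 : ((k:ℂ) * (-ω ^ 2 + 4 * ω * (Real.cos k : ℂ) - 1)
      + (α : ℂ) * ω * (Real.sin k : ℂ)) * (Real.sin k : ℂ) ^ 2 = 0 := by
    linear_combination heq
  have h2 : (k:ℂ) * (-ω ^ 2 + 4 * ω * (Real.cos k : ℂ) - 1)
      + (α : ℂ) * ω * (Real.sin k : ℂ) = 0 := by
    rcases mul_eq_zero.mp h1 with h | h
    · exact h
    · exact absurd h (pow_ne_zero 2 hsC)
  set c : ℂ := (Real.cos k : ℂ) with hc
  set s : ℂ := (Real.sin k : ℂ) with hsdef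
  have key : c - (ω ^ 2 + 1) / (4 * ω)
      = -(α : ℂ) * s / (4 * (k:ℂ)) := by
    field_simp
    linear_combination h2
  have habs : ‖c - (ω ^ 2 + 1) / (4 * ω)‖
      = |α| * |Real.sin k| / (4 * k) := by
    rw [key]
    rw [norm_div, norm_mul, norm_mul, norm_neg, hsdef]
    rw [Complex.norm_real, Complex.norm_real]
    simp [abs_of_pos (by linarith : (0:ℝ) < k)]
  have hkα : |α| / (4 * ε) < k := lt_of_le_of_lt (le_max_right _ _) hk
  have hbound : |α| * |Real.sin k| / (4 * k) < ε := by
    have h4k : (0:ℝ) < 4 * k := by linarith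
    rw [div_lt_iff₀ h4k]
    have hs1 : |Real.sin k| ≤ 1 := abs_sin_le_one k
    have hα : |α| < ε * (4 * k) := by
      have := (div_lt_iff₀ (by positivity : (0:ℝ) < 4 * ε)).mp hkα
      nlinarith
    nlinarith [abs_nonneg α, abs_nonneg (Real.sin k)]
  have hmain : ‖c - (ω ^ 2 + 1) / (4 * ω)‖ < ε := by
    rw [habs]; exact hbound
  refine ⟨hmain, ?_, ?_⟩
  · intro h
    subst h
    have he : ((Real.cos k + 1/2 : ℝ) : ℂ) = c - ((-1:ℂ) ^ 2 + 1) / (4 * (-1)) := by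
      rw [hc, Complex.ofReal_add]
      norm_num
    rw [← Real.norm_eq_abs, ← Complex.norm_real, he]
    exact hmain
  · intro h
    have h0 : (ω ^ 2 + 1) / (4 * ω) = 0 := by rw [h]; norm_num
    rw [h0, sub_zero, hc, Complex.norm_real, Real.norm_eq_abs] at hmain
    exact hmain
end

section
/- Suppose k > 0 satisfies k²cos²(k/2) + cos²(k/2) − 1/2 = 0. Then cos²(k/2) = 1/(2(k²+1)), so |cos(k/2)| ≤ 1/(√2·k) ≤ √(3/2)/k, and hence there exists n ∈ ℤ with |k − π − 2nπ| ≤ √6/k + O(1/k²). -/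
open Real

/-- Solutions of k²cos²(k/2) + cos²(k/2) − 1/2 = 0 (octahedron preferred-orientation
secular equation, j = 0 sector) are localized near odd multiples of π. -/
theorem octahedron_po_localization_j0 :
    ∃ C : ℝ, ∀ k : ℝ, k > 0 →
      k ^ 2 * cos (k / 2) ^ 2 + cos (k / 2) ^ 2 - 1 / 2 = 0 →
        cos (k / 2) ^ 2 = 1 / (2 * (k ^ 2 + 1)) ∧
        |cos (k / 2)| ≤ 1 / (Real.sqrt 2 * k) ∧
        |cos (k / 2)| ≤ Real.sqrt (3 / 2) / k ∧
        ∃ n : ℤ, |k - π - 2 * n * π| ≤ Real.sqrt 6 / k + C / k ^ 2 := by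
  refine ⟨0, fun k hk heq => ?_⟩
  have hk2 : (0:ℝ) < k ^ 2 + 1 := by positivity
  have h1 : cos (k / 2) ^ 2 = 1 / (2 * (k ^ 2 + 1)) := by
    field_simp
    nlinarith [heq]
  have hs2 : (0:ℝ) < Real.sqrt 2 := by positivity
  have hsqrt2k : Real.sqrt (1 / (2 * k ^ 2)) = 1 / (Real.sqrt 2 * k) := by
    rw [Real.sqrt_div (by norm_num) _, Real.sqrt_one,
      Real.sqrt_mul (by norm_num), Real.sqrt_sq hk.le]
  have habs : |cos (k / 2)| ≤ 1 / (Real.sqrt 2 * k) := by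
    have h2 : |cos (k / 2)| = Real.sqrt (1 / (2 * (k ^ 2 + 1))) := by
      rw [← h1, Real.sqrt_sq_eq_abs]
    rw [h2, ← hsqrt2k]
    apply Real.sqrt_le_sqrt
    apply div_le_div_of_nonneg_left (by norm_num) (by positivity) (by nlinarith)
  have hbound2 : |cos (k / 2)| ≤ Real.sqrt (3 / 2) / k := by
    refine habs.trans ?_
    rw [div_le_div_iff₀ (by positivity) hk, one_mul]
    calc k ≤ k * 1 := by ring_nf; exact le_refl _
      _ ≤ Real.sqrt (3 / 2) * (Real.sqrt 2 * k) := by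
          have h32 : (1:ℝ) ≤ Real.sqrt (3 / 2) * Real.sqrt 2 := by
            rw [← Real.sqrt_mul (by norm_num)]
            rw [show (3:ℝ)/2*2 = 3 by norm_num]
            nlinarith [Real.sq_sqrt (by norm_num : (0:ℝ) ≤ 3),
              Real.sqrt_nonneg (3:ℝ)]
          nlinarith
  refine ⟨h1, habs, hbound2, ?_⟩
  -- localization
  set x : ℝ := (k / 2 - π / 2) / π with hx
  refine ⟨round x, ?_⟩
  set n : ℤ := round x
  have hpi := Real.pi_pos
  have hθ : |k / 2 - π / 2 - n * π| ≤ π / 2 := by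
    have := abs_sub_round x
    have h' : |x - n| * π ≤ (1/2) * π := by
      exact mul_le_mul_of_nonneg_right this hpi.le
    calc |k / 2 - π / 2 - n * π| = |(x - n) * π| := by
          rw [hx]; congr 1; field_simp
      _ = |x - n| * π := by rw [abs_mul, abs_of_pos hpi]
      _ ≤ π / 2 := by linarith
  set θ : ℝ := k / 2 - π / 2 - n * π with hθdef
  have hcos : |cos (k / 2)| = |sin θ| := by
    have : k / 2 = (θ + π / 2) + n * π := by rw [hθdef]; ring
    rw [this, Real.cos_add_int_mul_pi, abs_mul, Real.cos_add_pi_div_two]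
    have h1n : |(-1:ℝ) ^ n| = 1 := by
      rcases Int.even_or_odd n with h | h
      · rw [h.neg_one_zpow]; norm_num
      · rw [h.neg_one_zpow]; norm_num
    rw [h1n, one_mul, abs_neg]
  have hjordan : 2 / π * |θ| ≤ |sin θ| := by
    have h1' : |θ| ≤ π / 2 := hθ
    have h0 : (0:ℝ) ≤ |θ| := abs_nonneg _
    have := Real.mul_le_sin h0 h1'
    calc 2 / π * |θ| ≤ sin |θ| := this
      _ ≤ |sin θ| := by
          rcases abs_cases θ with ⟨h, _⟩ | ⟨h, _⟩
          · rw [h]; exact le_abs_self _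
          · rw [h, Real.sin_neg]; exact neg_le_abs _
  have hθle : |θ| ≤ π / 2 * (1 / (Real.sqrt 2 * k)) := by
    have h2π : 0 < 2 / π := by positivity
    have : 2 / π * |θ| ≤ 1 / (Real.sqrt 2 * k) := by
      rw [← hcos] at hjordan
      exact hjordan.trans habs
    calc |θ| = π / 2 * (2 / π * |θ|) := by field_simp
      _ ≤ π / 2 * (1 / (Real.sqrt 2 * k)) := by
          exact mul_le_mul_of_nonneg_left this (by positivity)
  have hkey : |k - π - 2 * n * π| = 2 * |θ| := by
    rw [show k - π - 2 * n * π = 2 * θ by rw [hθdef]; ring, abs_mul]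
    norm_num
  rw [hkey]
  have hpi_sqrt12 : π ≤ Real.sqrt 12 := by
    have : (3.15:ℝ) ≤ Real.sqrt 12 := by
      rw [show (3.15:ℝ) = Real.sqrt (3.15^2) by
        rw [Real.sqrt_sq (by norm_num)]]
      apply Real.sqrt_le_sqrt; norm_num
    linarith [Real.pi_lt_d2.le]
  have hfinal : 2 * |θ| ≤ Real.sqrt 6 / k := by
    have h6 : Real.sqrt 6 * Real.sqrt 2 = Real.sqrt 12 := by
      rw [← Real.sqrt_mul (by norm_num)]; norm_num
    have : 2 * |θ| ≤ π / (Real.sqrt 2 * k) := by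
      calc 2 * |θ| ≤ 2 * (π / 2 * (1 / (Real.sqrt 2 * k))) := by linarith
        _ = π / (Real.sqrt 2 * k) := by ring
    refine this.trans ?_
    rw [div_le_div_iff₀ (by positivity) hk]
    calc π * k ≤ Real.sqrt 12 * k := by nlinarith
      _ = Real.sqrt 6 * (Real.sqrt 2 * k) := by rw [← h6]; ring
  calc 2 * |θ| ≤ Real.sqrt 6 / k := hfinal
    _ ≤ Real.sqrt 6 / k + 0 / k ^ 2 := by simp
end

section
/- Suppose k > 0 satisfies 2k⁴·cos k·cos²(k/2) + k²(1 + 4cos²(k/2)·cos k) + 2cos k·cos²(k/2) = 0. Then |cos k·cos²(k/2)| ≤ 5/(2k²) + O(1/k⁴), and consequently there exists n ∈ ℤ such that either |k − π − 2nπ| ≤ √10/k + O(1/k²) or |k − π/2 − nπ| ≤ 5/k² + O(1/k⁴). -/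
open Real

/-- If `|cos x| ≤ δ` then `x` is within `(π/2)·δ` of some point `π/2 + mπ`. -/
lemma near_cos_zero (x δ : ℝ) (h : |Real.cos x| ≤ δ) :
    ∃ m : ℤ, |x - π / 2 - m * π| ≤ π / 2 * δ := by
  have hπ : (0 : ℝ) < π := Real.pi_pos
  refine ⟨round ((x - π / 2) / π), ?_⟩
  set m : ℤ := round ((x - π / 2) / π)
  set t : ℝ := x - π / 2 - m * π with ht
  have htm : t = ((x - π / 2) / π - m) * π := by field_simp [ht]; ring
  have ht2 : |t| ≤ π / 2 := by
    rw [htm, abs_mul, abs_of_pos hπ]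
    have := abs_sub_round ((x - π / 2) / π)
    nlinarith
  have hx : x = t + π / 2 + m * π := by ring
  have hcos : |Real.cos x| = |Real.sin t| := by
    have h1 : |((-1 : ℝ)) ^ m| = 1 := by
      rcases Int.even_or_odd m with he | ho
      · rw [he.neg_one_zpow, abs_one]
      · rw [ho.neg_one_zpow, abs_neg, abs_one]
    rw [hx, Real.cos_add_int_mul_pi, Real.cos_add_pi_div_two, abs_mul, abs_neg, h1, one_mul]
  have hJ : 2 / π * |t| ≤ |Real.sin t| := Real.mul_abs_le_abs_sin ht2
  have h2 : 2 / π * |t| ≤ δ := hJ.trans (hcos ▸ h)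
  calc |t| = π / 2 * (2 / π * |t|) := by field_simp
    _ ≤ π / 2 * δ := by nlinarith

/-- Octahedron preferred-orientation secular equation, sectors j = 1 and j = 3: large
solutions accumulate near odd multiples of π or near half-integer multiples of π. -/
theorem octahedron_po_localization_j13 :
    ∃ C C' : ℝ, ∀ k : ℝ, k > 0 →
      2 * k ^ 4 * cos k * cos (k / 2) ^ 2 + k ^ 2 * (1 + 4 * cos (k / 2) ^ 2 * cos k)
        + 2 * cos k * cos (k / 2) ^ 2 = 0 →
      |cos k * cos (k / 2) ^ 2| ≤ 5 / (2 * k ^ 2) + C / k ^ 4 ∧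
      ∃ n : ℤ,
        |k - π - 2 * n * π| ≤ Real.sqrt 10 / k + C' / k ^ 2 ∨
        |k - π / 2 - n * π| ≤ 5 / k ^ 2 + C' / k ^ 4 := by
  refine ⟨0, 0, fun k hk heq => ?_⟩
  have hk2 : (0 : ℝ) < k ^ 2 := by positivity
  have hk4 : (0 : ℝ) < k ^ 4 := by positivity
  set c : ℝ := cos (k / 2) ^ 2 with hc
  have hc0 : 0 ≤ c := hc ▸ sq_nonneg _
  clear_value c
  -- the key identity : cos k * c * (2*(k²+1)²) = -k²
  have hkey : cos k * c * (2 * (k ^ 2 + 1) ^ 2) = -k ^ 2 := by nlinarith [heq]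
  have hden : (0 : ℝ) < 2 * (k ^ 2 + 1) ^ 2 := by positivity
  have hE : cos k * c = -k ^ 2 / (2 * (k ^ 2 + 1) ^ 2) := by
    field_simp
    linarith [hkey]
  have habsE : |cos k * c| = k ^ 2 / (2 * (k ^ 2 + 1) ^ 2) := by
    rw [hE, abs_div, abs_neg, abs_of_nonneg (le_of_lt hk2), abs_of_pos hden]
  have hEle : |cos k * c| ≤ 1 / (2 * k ^ 2) := by
    rw [habsE, div_le_div_iff₀ hden (by positivity)]
    nlinarith
  constructor
  · calc |cos k * c| ≤ 1 / (2 * k ^ 2) := hEle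
      _ ≤ 5 / (2 * k ^ 2) + 0 / k ^ 4 := by
        rw [zero_div, add_zero]
        gcongr
        norm_num
  · -- double angle : cos k = 2c - 1
    have hdbl : cos k = 2 * c - 1 := by
      have h := Real.cos_sq (k / 2)
      have h2 : 2 * (k / 2) = k := by ring
      rw [h2] at h
      rw [hc]; linarith
    by_cases hcase : c ≤ 1 / 4
    · -- near odd multiples of π : c ≤ 2ε ≤ 1/k²
      have hceq : c * (2 * (k ^ 2 + 1) ^ 2) = k ^ 2 + 2 * c ^ 2 * (2 * (k ^ 2 + 1) ^ 2) := by
        have h' : (2 * c - 1) * c * (2 * (k ^ 2 + 1) ^ 2) = -k ^ 2 := by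
          rw [← hdbl]; exact hkey
        nlinarith [h']
      have hcle2 : c ≤ (1 / k) ^ 2 := by
        have h1 : c * (2 * (k ^ 2 + 1) ^ 2) ≤ k ^ 2 + (c / 2) * (2 * (k ^ 2 + 1) ^ 2) := by
          nlinarith [hceq, sq_nonneg (k ^ 2 + 1)]
        have h2 : c * (k ^ 2 + 1) ^ 2 ≤ k ^ 2 := by nlinarith [h1]
        rw [div_pow, one_pow, le_div_iff₀ hk2]
        nlinarith [h2]
      have habscos : |cos (k / 2)| ≤ 1 / k := by
        have h1k : (0 : ℝ) < 1 / k := by positivity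
        nlinarith [sq_abs (cos (k / 2)), sq_nonneg (|cos (k / 2)| - 1 / k),
          abs_nonneg (cos (k / 2)), hcle2, hc]
      obtain ⟨m, hm⟩ := near_cos_zero (k / 2) (1 / k) habscos
      refine ⟨m, Or.inl ?_⟩
      have hpi_lt : π ≤ Real.sqrt 10 := by
        have h10 : (3.15 : ℝ) ≤ Real.sqrt 10 := by
          rw [show (3.15 : ℝ) = Real.sqrt (3.15 ^ 2) from (Real.sqrt_sq (by norm_num)).symm]
          exact Real.sqrt_le_sqrt (by norm_num)
        linarith [Real.pi_lt_d2]
      have key : k - π - 2 * (m : ℝ) * π = 2 * (k / 2 - π / 2 - m * π) := by ring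
      rw [zero_div, add_zero, key, abs_mul, abs_of_nonneg (by norm_num : (0:ℝ) ≤ 2)]
      calc 2 * |k / 2 - π / 2 - m * π| ≤ 2 * (π / 2 * (1 / k)) := by linarith
        _ = π / k := by ring
        _ ≤ Real.sqrt 10 / k := by gcongr
    · -- near half-integer multiples of π : |cos k| ≤ 2/k²
      push_neg at hcase
      have h4 : |cos k| ≤ 4 * (|cos k| * c) := by
        nlinarith [abs_nonneg (cos k),
          mul_nonneg (abs_nonneg (cos k)) (by linarith : (0:ℝ) ≤ 4 * c - 1)]
      have h5 : |cos k| * c ≤ 1 / (2 * k ^ 2) := by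
        rw [← abs_of_nonneg hc0, ← abs_mul]; exact hEle
      have h6 : (4 : ℝ) * (1 / (2 * k ^ 2)) = 2 / k ^ 2 := by
        ring
      have habscosk : |cos k| ≤ 2 / k ^ 2 := by
        calc |cos k| ≤ 4 * (|cos k| * c) := h4
          _ ≤ 4 * (1 / (2 * k ^ 2)) := by linarith
          _ = 2 / k ^ 2 := h6
      obtain ⟨m, hm⟩ := near_cos_zero k (2 / k ^ 2) habscosk
      refine ⟨m, Or.inr ?_⟩
      rw [zero_div, add_zero]
      calc |k - π / 2 - m * π| ≤ π / 2 * (2 / k ^ 2) := hm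
        _ = π / k ^ 2 := by ring
        _ ≤ 5 / k ^ 2 := by gcongr; linarith [Real.pi_lt_d2]
end

section
/- Suppose k > 0 satisfies k²(cos²(k/2) − 1/2) + cos²(k/2) = 0 (equivalently k²(cos(k/2) − √2/2)(cos(k/2) + √2/2) + cos²(k/2) = 0). Then |cos²(k/2) − 1/2| ≤ 1/k² + O(1/k⁴), and hence there exists n ∈ ℤ with |k − π/2 − nπ| ≤ 2/k² + O(1/k⁴). -/
open Real

/-- Octahedron preferred-orientation secular equation, sector j = 2: solutions of
k²(cos²(k/2) − 1/2) + cos²(k/2) = 0 are localized near k = π/2 + nπ with an O(1/k²)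
error. -/
theorem octahedron_po_localization_j2 :
    ∃ C : ℝ, ∀ k : ℝ, k > 0 →
      k ^ 2 * (cos (k / 2) ^ 2 - 1 / 2) + cos (k / 2) ^ 2 = 0 →
        |cos (k / 2) ^ 2 - 1 / 2| ≤ 1 / k ^ 2 + C / k ^ 4 ∧
        ∃ n : ℤ, |k - π / 2 - n * π| ≤ 2 / k ^ 2 + C / k ^ 4 := by
  refine ⟨0, fun k hk h => ?_⟩
  have hk2 : (0:ℝ) < k ^ 2 := by positivity
  set c : ℝ := cos (k / 2) ^ 2 with hc
  have hc0 : 0 ≤ c := sq_nonneg _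
  have hc1 : c ≤ 1 := cos_sq_le_one _
  have hcval : c = k ^ 2 / (2 * (k ^ 2 + 1)) := by
    field_simp
    nlinarith [h]
  constructor
  · have heq : c - 1 / 2 = -(c / k ^ 2) := by
      field_simp
      nlinarith [h]
    have habs : |c - 1 / 2| = c / k ^ 2 := by
      rw [heq, abs_neg, abs_of_nonneg (by positivity)]
    rw [habs, zero_div, add_zero]
    gcongr
  · -- cos k = -1/(k²+1)
    have hcosk : cos k = -(1 / (k ^ 2 + 1)) := by
      have h2 : cos (2 * (k / 2)) = 2 * c - 1 := by
        rw [Real.cos_two_mul]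
      have h3 : cos k = 2 * c - 1 := by
        rw [show k = 2 * (k / 2) by ring, h2]
      rw [h3, hcval]
      field_simp
      ring
    set n : ℤ := round ((k - π / 2) / π) with hn
    refine ⟨n, ?_⟩
    set d : ℝ := k - π / 2 - n * π with hd
    have hπ : (0:ℝ) < π := pi_pos
    have hdle : |d| ≤ π / 2 := by
      have h1 : |(k - π / 2) / π - n| ≤ 1 / 2 := abs_sub_round _
      have h2 : (k - π / 2) / π - n = d / π := by rw [hd]; field_simp
      rw [h2, abs_div, abs_of_pos hπ, div_le_iff₀ hπ] at h1
      linarith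
    -- |cos k| = |sin d|
    have hck : |cos k| = |sin d| := by
      have hkd : k = (d + π / 2) + n * π := by rw [hd]; ring
      rw [hkd, Real.cos_add_int_mul_pi, abs_mul]
      have hone : |((-1:ℝ)) ^ n| = 1 := by
        rcases Int.even_or_odd n with he | ho
        · rw [he.neg_one_zpow, abs_one]
        · rw [ho.neg_one_zpow, abs_neg, abs_one]
      rw [hone, one_mul, Real.cos_add_pi_div_two, abs_neg]
    -- Jordan's inequality
    have hjordan : 2 / π * |d| ≤ |sin d| := by
      rcases le_or_gt 0 d with hd0 | hd0
      · rw [abs_of_nonneg hd0]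
        calc 2 / π * d ≤ sin d := mul_le_sin hd0 (by simpa [abs_of_nonneg hd0] using hdle)
          _ ≤ |sin d| := le_abs_self _
      · rw [abs_of_neg hd0]
        have h1 : 2 / π * (-d) ≤ sin (-d) :=
          mul_le_sin (by linarith) (by simpa [abs_of_neg hd0] using hdle)
        rw [Real.sin_neg] at h1
        calc 2 / π * (-d) ≤ -sin d := h1
          _ ≤ |sin d| := neg_le_abs _
    have hsd : |sin d| = 1 / (k ^ 2 + 1) := by
      rw [← hck, hcosk, abs_neg, abs_of_pos (by positivity)]
    rw [hsd] at hjordan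
    have hdb : |d| ≤ π / 2 * (1 / (k ^ 2 + 1)) := by
      calc |d| = π / 2 * (2 / π * |d|) := by field_simp
        _ ≤ π / 2 * (1 / (k ^ 2 + 1)) :=
            mul_le_mul_of_nonneg_left hjordan (by positivity)
    calc |d| ≤ π / 2 * (1 / (k ^ 2 + 1)) := hdb
      _ ≤ 2 * (1 / k ^ 2) := by
          apply mul_le_mul (by linarith [pi_le_four]) ?_ (by positivity) (by norm_num)
          apply div_le_div_of_nonneg_left (by norm_num) hk2
          linarith
      _ = 2 / k ^ 2 + 0 / k ^ 4 := by
          rw [zero_div, add_zero]; ring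
end

section
/- The octahedron quantum graph with preferred-orientation coupling has eigenvalue square roots exactly at k = 2πn for n ∈ ℕ (coming from the factor sin²(k/2) in each of the four component secular equations) and exactly at k = ±2π/3 + 2πn (coming from the factor 4cos²(k/2) − 1 in the j = 0 and j = 2 sectors); all other large eigenvalue square roots lie in intervals [π + 2πn − √10/k + O(1/k²), π + 2πn + √10/k + O(1/k²)] or [π/2 + πn − 5/k² + O(1/k⁴), π/2 + πn + 5/k² + O(1/k⁴)]. -/
open Real

/-- The union of the zero sets of the four secular functions of the component
operators of the octahedron with preferred-orientation coupling. -/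
def octaSec (k : ℝ) : Prop :=
  k * sin (k / 2) ^ 2 * (4 * cos (k / 2) ^ 2 - 1) *
      (k ^ 2 * cos (k / 2) ^ 2 + cos (k / 2) ^ 2 - 1 / 2) = 0 ∨
  k * sin (k / 2) ^ 2 *
      (2 * k ^ 4 * cos k * cos (k / 2) ^ 2 + k ^ 2 * (1 + 4 * cos (k / 2) ^ 2 * cos k)
        + 2 * cos k * cos (k / 2) ^ 2) = 0 ∨
  k * sin (k / 2) ^ 2 * (cos (k / 2) ^ 2 - 1 / 4) *
      (k ^ 2 * (cos (k / 2) ^ 2 - 1 / 2) + cos (k / 2) ^ 2) = 0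

/-!
Each secular function carries the factor `k sin² (k/2)`, whose zeros are `k = 2πn`, and the
`j = 0, 2` functions carry `4 cos² (k/2) - 1 = 2 cos k + 1`, whose zeros are `k = ±2π/3 + 2πn`.
Writing `c = cos k`, the remaining factors are `(k² + 1)(1 + c) = 1`, `(k² + 1) c = -1` and
`c (1 + c)(k⁴ + 1) + k² (1 + 2c + 2c²) = 0`, so at a zero either `1 + c` or `|c|` is at most
`2/k²`. Jordan's inequality then places `k` within `π |cos (k/2)| ≤ π/k` of an odd multiple of `π`,
or within `(π/2) |cos k| ≤ π/k²` of an odd multiple of `π/2`. These bounds hold for every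
`k > 0`, with no correction term.
-/

namespace Real

lemma cos_sq_half (x : ℝ) : cos (x / 2) ^ 2 = (1 + cos x) / 2 := by
  rw [cos_sq, mul_div_cancel₀ x two_ne_zero]
  ring

/-- Jordan's inequality `|sin t| ≥ 2|t|/π` at the zero of `cos` nearest to `x`. -/
lemma exists_abs_sub_le_abs_cos (x : ℝ) :
    ∃ n : ℤ, |x - (π / 2 + π * n)| ≤ π / 2 * |cos x| := by
  set y := (x - π / 2) / π
  refine ⟨round y, ?_⟩
  set t := x - (π / 2 + π * round y)
  have ht_eq : t = π * (y - round y) := by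
    simp only [t, y]
    field_simp
    ring
  have ht : |t| ≤ π / 2 := by
    rw [ht_eq, abs_mul, abs_of_pos pi_pos]
    nlinarith [abs_sub_round y, pi_pos]
  have hcos : |cos x| = |sin t| := by
    rw [show x = t + π / 2 + round y * π by simp only [t]; ring, cos_add_int_mul_pi,
      cos_add_pi_div_two, abs_mul, abs_neg_one_zpow, one_mul, abs_neg]
  rw [hcos]
  have := mul_abs_le_abs_sin ht
  rw [div_mul_eq_mul_div, div_le_iff₀ pi_pos] at this
  linarith

lemma exists_abs_sub_le_abs_cos_half (x : ℝ) :
    ∃ n : ℤ, |x - (π + 2 * π * n)| ≤ π * |cos (x / 2)| := by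
  obtain ⟨n, hn⟩ := exists_abs_sub_le_abs_cos (x / 2)
  refine ⟨n, ?_⟩
  rw [show x - (π + 2 * π * n) = 2 * (x / 2 - (π / 2 + π * n)) by ring, abs_mul, abs_two]
  linarith

lemma cos_eq_neg_half_iff {x : ℝ} :
    cos x = -(1 / 2) ↔ ∃ n : ℤ, x = 2 * π / 3 + 2 * π * n ∨ x = -(2 * π / 3) + 2 * π * n := by
  have h : cos (2 * π / 3) = -(1 / 2) := by
    rw [show 2 * π / 3 = π - π / 3 by ring, cos_pi_sub, cos_pi_div_three]
  rw [← h, eq_comm, cos_eq_cos_iff]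
  refine exists_congr fun n => or_congr ?_ ?_ <;> constructor <;> intro h <;> linarith

end Real

lemma exists_abs_sub_le_of_abs_cos_le {k : ℝ} (hk : 0 < k) (h : |cos k| ≤ 2 / k ^ 2) :
    ∃ n : ℤ, |k - (π / 2 + π * n)| ≤ 5 / k ^ 2 := by
  obtain ⟨n, hn⟩ := exists_abs_sub_le_abs_cos k
  refine ⟨n, hn.trans ?_⟩
  calc π / 2 * |cos k| ≤ π / 2 * (2 / k ^ 2) := by gcongr
    _ = π / k ^ 2 := by ring
    _ ≤ 5 / k ^ 2 := by gcongr; linarith [pi_le_four]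

lemma exists_abs_sub_le_of_one_add_cos_le {k : ℝ} (hk : 0 < k) (h : 1 + cos k ≤ 2 / k ^ 2) :
    ∃ n : ℤ, |k - (π + 2 * π * n)| ≤ √10 / k := by
  obtain ⟨n, hn⟩ := exists_abs_sub_le_abs_cos_half k
  refine ⟨n, hn.trans ?_⟩
  have hcos : |cos (k / 2)| ≤ 1 / k := by
    refine abs_le_of_sq_le_sq ?_ (by positivity)
    rw [cos_sq_half, div_pow, one_pow]
    calc (1 + cos k) / 2 ≤ 2 / k ^ 2 / 2 := by gcongr
      _ = 1 / k ^ 2 := by ring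
  have hpi : π ≤ √10 := (le_sqrt pi_pos.le (by norm_num)).2 (by nlinarith [pi_lt_d2, pi_pos])
  calc π * |cos (k / 2)| ≤ √10 * (1 / k) := by gcongr
    _ = √10 / k := by ring

lemma octaSec_of_sin_half_eq_zero {k : ℝ} (h : sin (k / 2) = 0) : octaSec k :=
  Or.inl (by simp [h])

lemma octaSec_of_cos_eq_neg_half {k : ℝ} (h : cos k = -(1 / 2)) : octaSec k := by
  refine Or.inl ?_
  rw [cos_sq_half, h]
  ring

/-- The secular functions with `cos² (k/2)` expressed through `cos k`, and the common factor
`k sin² (k/2)` removed. -/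
lemma octaSec_cases {k : ℝ} (hk : k ≠ 0) (hs : sin (k / 2) ≠ 0) (h : octaSec k) :
    cos k = -(1 / 2) ∨ (k ^ 2 + 1) * (1 + cos k) = 1 ∨
      cos k * (1 + cos k) * (k ^ 4 + 1) + k ^ 2 * (1 + 2 * cos k + 2 * cos k ^ 2) = 0 ∨
      (k ^ 2 + 1) * cos k = -1 := by
  rw [octaSec, cos_sq_half] at h
  simp only [mul_eq_zero, pow_eq_zero_iff two_ne_zero (M₀ := ℝ), hk, hs, false_or] at h
  rcases h with (h | h) | h | h | h
  · exact Or.inl (by linarith)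
  · exact Or.inr (Or.inl (by linear_combination 2 * h))
  · exact Or.inr (Or.inr (Or.inl (by linear_combination h)))
  · exact Or.inl (by linarith)
  · exact Or.inr (Or.inr (Or.inr (by linear_combination 2 * h)))

/-- The middle secular equation forces `cos k ∈ (-1, 0)`; according as `cos k` lies below or
above `-1/2`, the factor `1 + cos k` or `cos k` is `O(1/k²)`. -/
lemma one_add_le_or_abs_le_of_secular {c k : ℝ} (hk : 0 < k)
    (h : c * (1 + c) * (k ^ 4 + 1) + k ^ 2 * (1 + 2 * c + 2 * c ^ 2) = 0) :
    1 + c ≤ 2 / k ^ 2 ∨ |c| ≤ 2 / k ^ 2 := by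
  have hk2 : 0 < k ^ 2 := by positivity
  have hquad : 0 < 1 + 2 * c + 2 * c ^ 2 := by nlinarith [sq_nonneg (2 * c + 1)]
  have hprod : c * (1 + c) < 0 := by
    by_contra! hnn
    nlinarith [mul_pos hk2 hquad, mul_nonneg hnn (by positivity : (0 : ℝ) ≤ k ^ 4 + 1)]
  have hc : c < 0 := by nlinarith
  have hc1 : 0 < 1 + c := by nlinarith
  rcases le_or_gt c (-(1 / 2)) with hhalf | hhalf
  · left
    rw [le_div_iff₀ hk2]
    nlinarith [mul_nonneg (mul_nonneg (by linarith : 0 ≤ -c - 1 / 2) hc1.le) (pow_nonneg hk2.le 2)]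
  · right
    rw [abs_of_neg hc, le_div_iff₀ hk2]
    nlinarith [mul_nonneg (mul_nonneg (neg_nonneg.2 hc.le) (by linarith : 0 ≤ c + 1 / 2))
      (pow_nonneg hk2.le 2)]

lemma one_add_cos_le_or_abs_cos_le {k : ℝ} (hk : 0 < k) (hs : sin (k / 2) ≠ 0)
    (hc : cos k ≠ -(1 / 2)) (h : octaSec k) :
    1 + cos k ≤ 2 / k ^ 2 ∨ |cos k| ≤ 2 / k ^ 2 := by
  have hk2 : 0 < k ^ 2 := by positivity
  rcases octaSec_cases hk.ne' hs h with h | h | h | h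
  · exact absurd h hc
  · left
    rw [le_div_iff₀ hk2]
    nlinarith [neg_one_le_cos k]
  · exact one_add_le_or_abs_le_of_secular hk h
  · right
    have hneg : cos k < 0 := by nlinarith
    rw [abs_of_neg hneg, le_div_iff₀ hk2]
    nlinarith

/-- The octahedron quantum graph with preferred-orientation coupling: eigenvalue square
roots occur exactly at 2πn, at ±2π/3 + 2πn, and otherwise (at high energy) in shrinking
intervals around π + 2πn or π/2 + πn. -/
theorem octahedron_po_spectrum :
    (∀ n : ℕ, octaSec (2 * π * n)) ∧
    (∀ n : ℤ, octaSec (2 * π / 3 + 2 * π * n) ∧ octaSec (-(2 * π / 3) + 2 * π * n)) ∧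
    ∃ C K : ℝ, ∀ k : ℝ, k > K → octaSec k →
      (∃ n : ℤ, k = 2 * π * n) ∨
      (∃ n : ℤ, k = 2 * π / 3 + 2 * π * n ∨ k = -(2 * π / 3) + 2 * π * n) ∨
      (∃ n : ℤ, |k - (π + 2 * π * n)| ≤ Real.sqrt 10 / k + C / k ^ 2) ∨
      (∃ n : ℤ, |k - (π / 2 + π * n)| ≤ 5 / k ^ 2 + C / k ^ 4) := by
  refine ⟨fun n => octaSec_of_sin_half_eq_zero ?_,
    fun n => ⟨octaSec_of_cos_eq_neg_half (cos_eq_neg_half_iff.2 ⟨n, Or.inl rfl⟩),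
      octaSec_of_cos_eq_neg_half (cos_eq_neg_half_iff.2 ⟨n, Or.inr rfl⟩)⟩,
    0, 0, fun k hk h => ?_⟩
  · rw [mul_div_right_comm, mul_div_cancel_left₀ _ two_ne_zero, mul_comm]
    exact sin_nat_mul_pi n
  by_cases hs : sin (k / 2) = 0
  · obtain ⟨n, hn⟩ := sin_eq_zero_iff.1 hs
    exact Or.inl ⟨n, by linarith⟩
  by_cases hc : cos k = -(1 / 2)
  · exact Or.inr (Or.inl (cos_eq_neg_half_iff.1 hc))
  simp only [zero_div, add_zero]
  rcases one_add_cos_le_or_abs_cos_le hk hs hc h with h | h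
  · exact Or.inr (Or.inr (Or.inl (exists_abs_sub_le_of_one_add_cos_le hk h)))
  · exact Or.inr (Or.inr (Or.inr (exists_abs_sub_le_of_abs_cos_le hk h)))
end

section
/- Suppose k > 0 and y = k²sin²k satisfies a monic cubic y³ + a₂y² + a₁y + a₀ = 0 with |a₂| ≤ 104, |a₁| ≤ 1544, and |a₀| ≤ 2424 + C/k² for a constant C. Then |k·sin k| ≤ 10.84 + O(1/k²), and consequently there exists n ∈ ℤ with |k − nπ| ≤ 10.84/k + O(1/k²). -/
open Real

/-- Eigenvalue localization for the icosahedron quantum graph with preferred-orientation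
coupling: if y = k²sin²k satisfies a monic cubic with bounded coefficients, then
|k sin k| ≤ 10.84 + O(1/k²), and k lies within 10.84/k + O(1/k²) of some nπ. -/
theorem icosahedron_po_localization (C : ℝ) :
    ∃ C' K : ℝ, ∀ k : ℝ, k > K → ∀ a₀ a₁ a₂ : ℂ,
      ‖a₂‖ ≤ 104 → ‖a₁‖ ≤ 1544 → ‖a₀‖ ≤ 2424 + C / k ^ 2 →
      ((k : ℂ) ^ 2 * (Real.sin k : ℂ) ^ 2) ^ 3
          + a₂ * ((k : ℂ) ^ 2 * (Real.sin k : ℂ) ^ 2) ^ 2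
          + a₁ * ((k : ℂ) ^ 2 * (Real.sin k : ℂ) ^ 2) + a₀ = 0 →
      |k * Real.sin k| ≤ 10.84 + C' / k ^ 2 ∧
      ∃ n : ℤ, |k - n * π| ≤ 10.84 / k + C' / k ^ 2 := by
  refine ⟨5000, max 100 |C|, fun k hk a₀ a₁ a₂ h2 h1 h0 heq => ?_⟩
  have hk100 : (100 : ℝ) ≤ k := le_of_lt (lt_of_le_of_lt (le_max_left _ _) hk)
  have hkC : |C| ≤ k := le_of_lt (lt_of_le_of_lt (le_max_right _ _) hk)
  have hk0 : 0 < k := by linarith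
  have hk2 : (0:ℝ) < k ^ 2 := by positivity
  set s := Real.sin k with hs
  set y := k ^ 2 * s ^ 2 with hy
  have hy0 : 0 ≤ y := by positivity
  have hcast : ((k:ℂ) ^ 2 * (s:ℂ) ^ 2) = (y:ℂ) := by rw [hy]; push_cast; ring
  rw [hcast] at heq
  have heq' : (y:ℂ) ^ 3 = -(a₂ * (y:ℂ) ^ 2 + a₁ * (y:ℂ) + a₀) := by
    linear_combination heq
  have hCk : C / k ^ 2 ≤ 1 := by
    rw [div_le_one hk2]
    nlinarith [le_abs_self C]
  have habs : y ^ 3 ≤ 104 * y ^ 2 + 1544 * y + 2425 := by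
    have h3 : y ^ 3 = ‖(y:ℂ) ^ 3‖ := by
      rw [norm_pow, Complex.norm_real, Real.norm_eq_abs, abs_of_nonneg hy0]
    rw [h3, heq', norm_neg]
    calc ‖a₂ * (y:ℂ) ^ 2 + a₁ * (y:ℂ) + a₀‖
        ≤ ‖a₂ * (y:ℂ) ^ 2‖ + ‖a₁ * (y:ℂ)‖ + ‖a₀‖ := by
          refine le_trans (norm_add_le _ _) ?_
          exact add_le_add (norm_add_le _ _) le_rfl
      _ ≤ 104 * y ^ 2 + 1544 * y + (2424 + C / k ^ 2) := by
          rw [norm_mul, norm_mul, norm_pow, Complex.norm_real, Real.norm_eq_abs, abs_of_nonneg hy0]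
          refine add_le_add (add_le_add ?_ ?_) h0
          · exact mul_le_mul_of_nonneg_right h2 (by positivity)
          · exact mul_le_mul_of_nonneg_right h1 hy0
      _ ≤ 104 * y ^ 2 + 1544 * y + 2425 := by linarith
  have hy117 : y ≤ 117.5 := by
    nlinarith [sq_nonneg (y - 117.5), sq_nonneg y, mul_nonneg hy0 hy0]
  have hks : |k * s| ≤ 10.84 := by
    have hsq : (k * s) ^ 2 = y := by rw [hy]; ring
    nlinarith [abs_nonneg (k * s), sq_abs (k * s)]
  constructor
  · have : (0:ℝ) ≤ 5000 / k ^ 2 := by positivity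
    linarith
  -- second part
  have hsin : |s| ≤ 10.84 / k := by
    rw [le_div_iff₀ hk0]
    rw [abs_mul, abs_of_pos hk0] at hks
    linarith [hks]
  refine ⟨round (k / π), ?_⟩
  set x := k - (round (k / π) : ℤ) * π with hxdef
  have hpi0 : (0:ℝ) < π := pi_pos
  have hxpi : |x| ≤ π / 2 := by
    have h := abs_sub_round (k / π)
    have : x = (k / π - round (k / π)) * π := by rw [hxdef]; field_simp
    rw [this, abs_mul, abs_of_pos hpi0]
    nlinarith [h, hpi0]
  have hsinx : |Real.sin x| = |s| := by
    have : Real.sin (x + (round (k / π) : ℤ) * π) = (-1) ^ (round (k / π)) * Real.sin x :=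
      Real.sin_add_int_mul_pi x _
    have hxk : x + (round (k / π) : ℤ) * π = k := by ring
    rw [hxk] at this
    rw [hs, this, abs_mul]
    rcases Int.even_or_odd (round (k / π)) with he | ho
    · rw [he.neg_one_zpow, abs_one, one_mul]
    · rw [Odd.neg_one_zpow ho, abs_neg, abs_one, one_mul]
  -- Jordan-type bound: |x| ≤ (π/2) |sin x|
  have hsinabs : |Real.sin (|x|)| = |Real.sin x| := by
    rcases le_or_gt 0 x with h | h
    · rw [abs_of_nonneg h]
    · rw [abs_of_neg h, Real.sin_neg, abs_neg]
  have hjordan : |x| ≤ π / 2 * |Real.sin x| := by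
    have h1' : 2 / π * |x| ≤ Real.sin |x| := mul_le_sin (abs_nonneg x) hxpi
    have h2' : Real.sin |x| ≤ |Real.sin x| := by
      rw [← hsinabs]; exact le_abs_self _
    have : 2 / π * |x| ≤ |Real.sin x| := le_trans h1' h2'
    calc |x| = π / 2 * (2 / π * |x|) := by field_simp
      _ ≤ π / 2 * |Real.sin x| := by
          exact mul_le_mul_of_nonneg_left this (by positivity)
  have hpi315 : π < 3.15 := pi_lt_d2
  have hx18 : |x| ≤ 18 / k := by
    have : |x| ≤ π / 2 * (10.84 / k) := by
      refine le_trans hjordan (mul_le_mul_of_nonneg_left ?_ (by positivity))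
      rw [hsinx]; exact hsin
    have h184 : π / 2 * (10.84 / k) ≤ 18 / k := by
      rw [show π / 2 * (10.84 / k) = π * 10.84 / 2 / k by ring, div_le_div_iff₀ hk0 hk0]
      nlinarith
    linarith
  have hcube : |x| ^ 3 ≤ 5832 / k ^ 3 := by
    have := pow_le_pow_left₀ (abs_nonneg x) hx18 3
    calc |x| ^ 3 ≤ (18 / k) ^ 3 := this
      _ = 5832 / k ^ 3 := by ring
  rcases eq_or_lt_of_le (abs_nonneg x) with h0x | h0x
  · rw [← h0x]
    positivity
  · have hx1 : |x| ≤ 1 := by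
      have : (18:ℝ) / k ≤ 18 / 100 := by
        apply div_le_div_of_nonneg_left (by norm_num) (by norm_num) hk100
      linarith
    have hgt := Real.sin_gt_sub_cube h0x
    have hle : |x| ≤ |Real.sin x| + |x| ^ 3 / 4 := by
      have : Real.sin |x| ≤ |Real.sin x| := by rw [← hsinabs]; exact le_abs_self _
      linarith [pow_nonneg (abs_nonneg x) 3]
    have hkk : 5832 / k ^ 3 / 4 ≤ 5000 / k ^ 2 := by
      rw [div_div, div_le_div_iff₀ (by positivity) (by positivity)]
      have hp : k ^ 2 * 100 ≤ k ^ 2 * k := mul_le_mul_of_nonneg_left hk100 (sq_nonneg k)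
      have hq : k ^ 2 * k = k ^ 3 := by ring
      linarith [sq_nonneg k]
    have : |Real.sin x| ≤ 10.84 / k := by rw [hsinx]; exact hsin
    linarith
end
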